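/- Let T be a stress-energy tensor on (N+1)-dimensional Minkowski space satisfying the dominant energy condition. Let V be a future-directed timelike vector normalized so that η(V,V) = -1, and let A, B be vectors with η(V,A) = η(V,B) = 0. Then |T(A,B)| ≤ T(V,V) · √(η(A,A)) · √(η(B,B)). -/

import Mathlib

open Matrix

/-- The Minkowski metric `diag(-1,1,…,1)` on `ℝ^{N+1}`. -/
noncomputable def eta (N : ℕ) : Matrix (Fin (N+1)) (Fin (N+1)) ℝ :=
  Matrix.diagonal (fun i => if i = 0 then (-1 : ℝ) else 1)

/-- The Minkowski bilinear form `η(x,y) = -x₀y₀ + ∑ᵢ xᵢyᵢ`. -/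
noncomputable def mdot {N : ℕ} (x y : Fin (N+1) → ℝ) : ℝ :=
  x ⬝ᵥ (eta N).mulVec y

/-- Future-directed timelike: `η(v,v) < 0` and `v₀ > 0`. -/
def FDTimelike {N : ℕ} (v : Fin (N+1) → ℝ) : Prop :=
  mdot v v < 0 ∧ 0 < v 0

/-- Future-directed lightlike: `v ≠ 0`, `η(v,v) = 0` and `v₀ > 0`. -/
def FDLightlike {N : ℕ} (v : Fin (N+1) → ℝ) : Prop :=
  v ≠ 0 ∧ mdot v v = 0 ∧ 0 < v 0

/-- Future-directed causal: future-directed timelike or lightlike. -/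
def FDCausal {N : ℕ} (v : Fin (N+1) → ℝ) : Prop :=
  FDTimelike v ∨ FDLightlike v

/-- The bilinear form associated to a matrix: `T(v,w) = vᵀ T w`. -/
noncomputable def Tbil {N : ℕ} (T : Matrix (Fin (N+1)) (Fin (N+1)) ℝ)
    (v w : Fin (N+1) → ℝ) : ℝ :=
  v ⬝ᵥ T.mulVec w

/-- The endomorphism associated to a stress-energy tensor: `u(v) = -ηTv`. -/
noncomputable def endo {N : ℕ} (T : Matrix (Fin (N+1)) (Fin (N+1)) ℝ)
    (v : Fin (N+1) → ℝ) : Fin (N+1) → ℝ :=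
  -((eta N).mulVec (T.mulVec v))

/-- The dominant energy condition: every future-directed causal vector is
sent by the associated endomorphism to a future-directed causal vector or zero. -/
def DEC {N : ℕ} (T : Matrix (Fin (N+1)) (Fin (N+1)) ℝ) : Prop :=
  ∀ v : Fin (N+1) → ℝ, FDCausal v → FDCausal (endo T v) ∨ endo T v = 0

/-!
Under the dominant energy condition `T(w, v) = -η(u(v), w) ≥ 0` for all future causal `v, w`,
since two future causal vectors have `η(x, y) ≤ 0`. A nonzero `A ⊥ V` is spacelike, and with
`a = √η(A, A)` both `a V + A` and `a V - A` are future lightlike, as `η(V, a V ± A) = -a < 0`.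
Adding `T(a V + A, b V ± B)` and `T(a V - A, b V ∓ B)` the cross terms cancel, leaving
`0 ≤ 2 a b T(V, V) ± 2 T(A, B)`.
-/

theorem LinearMap.BilinForm.abs_apply_le_of_nonneg_pm {M : Type*} [AddCommGroup M] [Module ℝ M]
    (β : LinearMap.BilinForm ℝ M) {v x y : M} {a b : ℝ}
    (hpp : 0 ≤ β (a • v + x) (b • v + y)) (hmm : 0 ≤ β (a • v - x) (b • v - y))
    (hpm : 0 ≤ β (a • v + x) (b • v - y)) (hmp : 0 ≤ β (a • v - x) (b • v + y)) :
    |β x y| ≤ a * b * β v v := by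
  simp only [map_add, map_sub, map_smul, LinearMap.add_apply, LinearMap.sub_apply,
    LinearMap.smul_apply, smul_eq_mul] at hpp hmm hpm hmp
  rw [abs_le]
  constructor <;> linarith

theorem sq_dotProduct_le {n : Type*} [Fintype n] (x y : n → ℝ) :
    (x ⬝ᵥ y) ^ 2 ≤ (x ⬝ᵥ x) * (y ⬝ᵥ y) := by
  simpa only [dotProduct, pow_two] using Finset.sum_mul_sq_le_sq_mul_sq Finset.univ x y

theorem dotProduct_self_nonneg {n : Type*} [Fintype n] (x : n → ℝ) : 0 ≤ x ⬝ᵥ x :=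
  Finset.sum_nonneg fun i _ => mul_self_nonneg (x i)

section Minkowski

variable {N : ℕ}

theorem Tbil_eq_toBilin' (T : Matrix (Fin (N+1)) (Fin (N+1)) ℝ) (v w : Fin (N+1) → ℝ) :
    Tbil T v w = Matrix.toBilin' T v w :=
  (Matrix.toBilin'_apply' T v w).symm

theorem mdot_eq_toBilin' (x y : Fin (N+1) → ℝ) : mdot x y = Matrix.toBilin' (eta N) x y :=
  (Matrix.toBilin'_apply' _ x y).symm

theorem mdot_eq_neg_mul_add_dotProduct_tail (x y : Fin (N+1) → ℝ) :
    mdot x y = -(x 0 * y 0) + Fin.tail x ⬝ᵥ Fin.tail y := by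
  simp [mdot, eta, dotProduct, mulVec_diagonal, Fin.sum_univ_succ, Fin.succ_ne_zero, Fin.tail]

theorem mdot_comm (x y : Fin (N+1) → ℝ) : mdot x y = mdot y x := by
  simp only [mdot_eq_neg_mul_add_dotProduct_tail, mul_comm (x 0), dotProduct_comm]

theorem mdot_nonpos_of_FDCausal {x y : Fin (N+1) → ℝ} (hx : FDCausal x) (hy : FDCausal y) :
    mdot x y ≤ 0 := by
  have causal (z : Fin (N+1) → ℝ) (hz : FDCausal z) :
      0 < z 0 ∧ Fin.tail z ⬝ᵥ Fin.tail z ≤ z 0 ^ 2 := by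
    rcases hz with ⟨hzz, hz0⟩ | ⟨-, hzz, hz0⟩ <;>
      exact ⟨hz0, by rw [mdot_eq_neg_mul_add_dotProduct_tail] at hzz; nlinarith⟩
  obtain ⟨hx0, hxx⟩ := causal x hx
  obtain ⟨hy0, hyy⟩ := causal y hy
  have hcs := sq_dotProduct_le (Fin.tail x) (Fin.tail y)
  rw [mdot_eq_neg_mul_add_dotProduct_tail]
  nlinarith [dotProduct_self_nonneg (Fin.tail x), dotProduct_self_nonneg (Fin.tail y),
    mul_pos hx0 hy0]

theorem eta_mul_eta : eta N * eta N = 1 := by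
  rw [eta, diagonal_mul_diagonal, ← diagonal_one]
  congr 1; ext i; split_ifs <;> norm_num

theorem mdot_endo (T : Matrix (Fin (N+1)) (Fin (N+1)) ℝ) (v w : Fin (N+1) → ℝ) :
    mdot (endo T v) w = -Tbil T w v := by
  have hsymm : (eta N)ᵀ = eta N := diagonal_transpose _
  rw [mdot, endo, Tbil, neg_dotProduct, dotProduct_mulVec, ← vecMul_transpose, hsymm,
    vecMul_vecMul, eta_mul_eta, vecMul_one, dotProduct_comm]

theorem Tbil_nonneg_of_DEC {T : Matrix (Fin (N+1)) (Fin (N+1)) ℝ} (hdec : DEC T)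
    {v w : Fin (N+1) → ℝ} (hv : FDCausal v) (hw : FDCausal w) : 0 ≤ Tbil T v w := by
  rw [← neg_nonpos, ← mdot_endo]
  rcases hdec w hw with hu | hu
  · exact mdot_nonpos_of_FDCausal hu hv
  · simp [hu, mdot]

theorem mdot_self_pos_of_mdot_eq_zero {V A : Fin (N+1) → ℝ} (hV : mdot V V < 0)
    (hVA : mdot V A = 0) (hA : A ≠ 0) : 0 < mdot A A := by
  rw [mdot_eq_neg_mul_add_dotProduct_tail] at hV hVA ⊢
  set v := Fin.tail V
  set a := Fin.tail A
  have hcs := sq_dotProduct_le v a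
  have hV0 : 0 < V 0 ^ 2 := by nlinarith [dotProduct_self_nonneg v]
  have haa : 0 < a ⬝ᵥ a := by
    refine (dotProduct_self_nonneg a).lt_of_ne' fun h => hA ?_
    have ha : a = 0 := dotProduct_self_eq_zero.mp h
    rw [ha, dotProduct_zero, add_zero, neg_eq_zero] at hVA
    have hA0 : A 0 = 0 := (mul_eq_zero.mp hVA).resolve_left fun h => by simp [h] at hV0
    funext i
    exact Fin.cases hA0 (fun j => congrFun ha j) i
  -- Cauchy–Schwarz on the spatial parts: `V₀² A₀² = (v ⬝ᵥ a)² ≤ (v ⬝ᵥ v)(a ⬝ᵥ a) < V₀² (a ⬝ᵥ a)`.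
  rw [show v ⬝ᵥ a = V 0 * A 0 by linarith, mul_pow] at hcs
  have : V 0 ^ 2 * A 0 ^ 2 < V 0 ^ 2 * (a ⬝ᵥ a) := by
    linarith [mul_lt_mul_of_pos_right (show v ⬝ᵥ v < V 0 ^ 2 by linarith) haa]
  nlinarith [lt_of_mul_lt_mul_left this hV0.le]

theorem FDLightlike_of_mdot_neg {V w : Fin (N+1) → ℝ} (hV : FDTimelike V) (hw : mdot w w = 0)
    (hVw : mdot V w < 0) : FDLightlike w := by
  refine ⟨fun h => by simp [h, mdot] at hVw, hw, ?_⟩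
  obtain ⟨hVV, hV0⟩ := hV
  rw [mdot_eq_neg_mul_add_dotProduct_tail] at hVV hVw hw
  have hcs := sq_dotProduct_le (Fin.tail V) (Fin.tail w)
  by_contra! hw0
  nlinarith [dotProduct_self_nonneg (Fin.tail w), mul_nonpos_of_nonneg_of_nonpos hV0.le hw0]

theorem FDLightlike_sqrt_smul_add {V A : Fin (N+1) → ℝ} (hV : FDTimelike V)
    (hVnorm : mdot V V = -1) (hVA : mdot V A = 0) (hA : A ≠ 0) :
    FDLightlike (√(mdot A A) • V + A) := by
  have hAA := mdot_self_pos_of_mdot_eq_zero (hVnorm ▸ neg_one_lt_zero) hVA hA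
  have hAV : mdot A V = 0 := mdot_comm A V ▸ hVA
  set a := √(mdot A A)
  have ha : 0 < a := Real.sqrt_pos.mpr hAA
  have ha2 : a ^ 2 = mdot A A := Real.sq_sqrt hAA.le
  simp only [mdot_eq_toBilin'] at hVnorm hVA hAV ha2
  refine FDLightlike_of_mdot_neg hV ?_ ?_ <;>
    simp only [mdot_eq_toBilin', map_add, map_smul, LinearMap.add_apply, LinearMap.smul_apply,
      smul_eq_mul, hVnorm, hVA, hAV, ← ha2]
  · ring
  · linarith

theorem FDCausal_sqrt_smul_add_and_sub {V A : Fin (N+1) → ℝ} (hV : FDTimelike V)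
    (hVnorm : mdot V V = -1) (hVA : mdot V A = 0) (hA : A ≠ 0) :
    FDCausal (√(mdot A A) • V + A) ∧ FDCausal (√(mdot A A) • V - A) := by
  have hVnegA : mdot V (-A) = 0 := by
    rw [mdot_eq_toBilin', map_neg, ← mdot_eq_toBilin', hVA, neg_zero]
  have hnegA : mdot (-A) (-A) = mdot A A := by simp [mdot_eq_toBilin']
  have hm := FDLightlike_sqrt_smul_add hV hVnorm hVnegA (neg_ne_zero.mpr hA)
  rw [hnegA, ← sub_eq_add_neg] at hm
  exact ⟨.inr (FDLightlike_sqrt_smul_add hV hVnorm hVA hA), .inr hm⟩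

end Minkowski

theorem dec_ineq_two_general {N : ℕ}
    (T : Matrix (Fin (N+1)) (Fin (N+1)) ℝ)
    (hdec : DEC T)
    (V : Fin (N+1) → ℝ) (hV : FDTimelike V) (hVnorm : mdot V V = -1)
    (A B : Fin (N+1) → ℝ) (horthA : mdot V A = 0) (horthB : mdot V B = 0) :
    |Tbil T A B| ≤ Tbil T V V * Real.sqrt (mdot A A) * Real.sqrt (mdot B B) := by
  rcases eq_or_ne A 0 with rfl | hA
  · simp [Tbil, mdot]
  rcases eq_or_ne B 0 with rfl | hB
  · simp [Tbil, mdot]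
  obtain ⟨hAp, hAm⟩ := FDCausal_sqrt_smul_add_and_sub hV hVnorm horthA hA
  obtain ⟨hBp, hBm⟩ := FDCausal_sqrt_smul_add_and_sub hV hVnorm horthB hB
  have hT {X Y} (hX : FDCausal X) (hY : FDCausal Y) : 0 ≤ Matrix.toBilin' T X Y :=
    Tbil_eq_toBilin' T X Y ▸ Tbil_nonneg_of_DEC hdec hX hY
  rw [Tbil_eq_toBilin', Tbil_eq_toBilin']
  exact ((Matrix.toBilin' T).abs_apply_le_of_nonneg_pm (hT hAp hBp) (hT hAm hBm) (hT hAp hBm)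
    (hT hAm hBp)).trans_eq (by ring)

/-- Inequality (2): `|T(A,B)| ≤ T(V,V) ⬝ |A| ⬝ |B|` for `V` unit timelike and
`A`, `B` orthogonal to `V`. -/
theorem dec_ineq_two {N : ℕ} (hN : 1 ≤ N)
    (T : Matrix (Fin (N+1)) (Fin (N+1)) ℝ) (hsymm : T.IsSymm)
    (hdec : DEC T)
    (V : Fin (N+1) → ℝ) (hV : FDTimelike V) (hVnorm : mdot V V = -1)
    (A B : Fin (N+1) → ℝ) (horthA : mdot V A = 0) (horthB : mdot V B = 0) :
    |Tbil T A B| ≤ Tbil T V V * Real.sqrt (mdot A A) * Real.sqrt (mdot B B) :=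
  dec_ineq_two_general T hdec V hV hVnorm A B horthA horthB
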